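/- arXiv:2503.24347 — 5 statements merged into one kernel-verified Lean document; each statement's English description precedes it below -/
import Mathlib

section
/- Let n ≥ 1, κ ∈ [0,1], and let k : Fin n → Fin 2 be an outcome string with j = #{m : k(m) = 0} ≥ 1 zeros. Then A_k W_n = √(κ^{n-j}·(1-κ)^{j-1}/n) · ∑_{i : k(i)=0} e_i, i.e., the unnormalized post-measurement state is proportional to the W state supported on the parties whose outcome was 0. -/
open scoped Classical

/-- The `n`-qubit W state: amplitude `1/√n` on strings with exactly one `1`. -/
noncomputable def Wstate (n : ℕ) : (Fin n → Fin 2) → ℂ := fun x =>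
  if (Finset.univ.filter fun m => x m = 1).card = 1 then ((1 / Real.sqrt n : ℝ) : ℂ) else 0

/-- Entries of the single-parameter Kraus operators:
`d(0,0)=√(1-κ)`, `d(0,1)=1`, `d(1,0)=√κ`, `d(1,1)=0`. -/
noncomputable def dEntry (κ : ℝ) : Fin 2 → Fin 2 → ℂ := fun a b =>
  if a = 0 then (if b = 0 then ((Real.sqrt (1 - κ) : ℝ) : ℂ) else 1)
  else (if b = 0 then ((Real.sqrt κ : ℝ) : ℂ) else 0)

/-- The product Kraus operator `A_k` associated with outcome string `k`. -/
noncomputable def krausApply (n : ℕ) (κ : ℝ) (k : Fin n → Fin 2)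
    (v : (Fin n → Fin 2) → ℂ) : (Fin n → Fin 2) → ℂ :=
  fun x => (∏ m, dEntry κ (k m) (x m)) * v x

/-- The computational basis vector `e_i` with a single `1` in coordinate `i`. -/
def basisVec (n : ℕ) (i : Fin n) : (Fin n → Fin 2) → ℂ :=
  fun x => if x = (fun m => if m = i then 1 else 0) then 1 else 0

private lemma sqrt_pow_aux (x : ℝ) (h : 0 ≤ x) (p : ℕ) :
    Real.sqrt (x ^ p) = Real.sqrt x ^ p := by
  calc Real.sqrt (x ^ p) = Real.sqrt ((Real.sqrt x ^ p) ^ 2) := by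
        rw [← pow_mul, mul_comm, pow_mul, Real.sq_sqrt h]
    _ = Real.sqrt x ^ p := Real.sqrt_sq (pow_nonneg (Real.sqrt_nonneg x) p)

private lemma delta_filter (n : ℕ) (i : Fin n) :
    (Finset.univ.filter fun m => (if m = i then (1 : Fin 2) else 0) = 1) = {i} := by
  ext m
  simp only [Finset.mem_filter, Finset.mem_univ, true_and, Finset.mem_singleton]
  by_cases h : m = i <;> simp [h]

/-- The unnormalized post-measurement state of an outcome string `k` with `j ≥ 1`
zeros is `√(κ^{n-j}·(1-κ)^{j-1}/n)` times the W state supported on the parties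
whose outcome was `0`. -/
theorem post_measurement_state (n : ℕ) (hn : 1 ≤ n) (κ : ℝ) (hκ : κ ∈ Set.Icc (0:ℝ) 1)
    (k : Fin n → Fin 2) (j : ℕ) (hj : j = (Finset.univ.filter fun m => k m = 0).card)
    (hj1 : 1 ≤ j) :
    krausApply n κ k (Wstate n) =
      fun x => ((Real.sqrt (κ ^ (n - j) * (1 - κ) ^ (j - 1) / n) : ℝ) : ℂ) *
        ∑ i ∈ Finset.univ.filter (fun i => k i = 0), basisVec n i x := by
  obtain ⟨hκ0, hκ1⟩ := hκ
  have h1κ : (0:ℝ) ≤ 1 - κ := by linarith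
  have hjn : j ≤ n := by
    rw [hj]
    simpa using Finset.card_filter_le Finset.univ (fun m => k m = 0)
  funext x
  simp only [krausApply, Wstate]
  by_cases hx : (Finset.univ.filter fun m => x m = 1).card = 1
  · -- x has exactly one 1, at position i
    obtain ⟨i, hi⟩ := Finset.card_eq_one.mp hx
    have hxi : x i = 1 := by
      have h := Finset.mem_singleton_self i
      rw [← hi, Finset.mem_filter] at h
      exact h.2
    have hxm : ∀ m, m ≠ i → x m = 0 := by
      intro m hm
      have h1 : x m ≠ 1 := by
        intro h
        apply hm
        have hmem : m ∈ ({i} : Finset (Fin n)) := by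
          rw [← hi, Finset.mem_filter]; exact ⟨Finset.mem_univ m, h⟩
        simpa using hmem
      omega
    have hxeq : x = fun m => if m = i then 1 else 0 := by
      funext m
      by_cases h : m = i
      · subst h; simpa using hxi
      · simp [h, hxm m h]
    -- the sum on the RHS
    have hbv : ∀ i' : Fin n, basisVec n i' x = if i' = i then 1 else 0 := by
      intro i'
      simp only [basisVec]
      by_cases h : i' = i
      · subst h; rw [if_pos hxeq, if_pos rfl]
      · rw [if_neg, if_neg h]
        intro he
        have h0 := congrFun he i'
        rw [hxm i' h] at h0
        simp at h0
    rw [Finset.sum_congr rfl (fun i' _ => hbv i'), Finset.sum_ite_eq']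
    simp only [Finset.mem_filter, Finset.mem_univ, true_and]
    -- split off the factor at i
    rw [if_pos hx, ← Finset.mul_prod_erase Finset.univ _ (Finset.mem_univ i)]
    have hprod : ∀ m ∈ Finset.univ.erase i,
        dEntry κ (k m) (x m) =
          (if k m = 0 then ((Real.sqrt (1 - κ) : ℝ) : ℂ) else ((Real.sqrt κ : ℝ) : ℂ)) := by
      intro m hm
      rw [hxm m (Finset.ne_of_mem_erase hm)]
      simp only [dEntry]
      by_cases h : k m = 0 <;> simp [h]
    rw [Finset.prod_congr rfl hprod, Finset.prod_ite, Finset.prod_const, Finset.prod_const]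
    have hc1 : ((Finset.univ.erase i).filter fun m => k m = 0).card
        = (if k i = 0 then j - 1 else j) := by
      rw [Finset.filter_erase]
      by_cases h : k i = 0
      · rw [if_pos h, Finset.card_erase_of_mem, ← hj]
        rw [Finset.mem_filter]; exact ⟨Finset.mem_univ i, h⟩
      · rw [if_neg h, Finset.erase_eq_of_notMem, ← hj]
        rw [Finset.mem_filter]
        rintro ⟨-, hh⟩; exact h hh
    have hcsum : ((Finset.univ.erase i).filter fun m => k m = 0).card
        + ((Finset.univ.erase i).filter fun m => ¬ k m = 0).card = n - 1 := by
      rw [Finset.card_filter_add_card_filter_not, Finset.card_erase_of_mem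
        (Finset.mem_univ i), Finset.card_univ, Fintype.card_fin]

    by_cases h : k i = 0
    · -- outcome 0 at i
      rw [if_pos h]
      have hdi : dEntry κ (k i) (x i) = 1 := by
        rw [hxi, h]; simp [dEntry]
      rw [hdi, hc1, if_pos h]
      have hc2 : ((Finset.univ.erase i).filter fun m => ¬ k m = 0).card = n - j := by
        rw [hc1, if_pos h] at hcsum; omega
      rw [hc2]
      rw [Real.sqrt_div (by positivity), Real.sqrt_mul (by positivity),
        sqrt_pow_aux κ hκ0, sqrt_pow_aux (1-κ) h1κ]
      push_cast
      ring
    · -- outcome 1 at i: both sides vanish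
      rw [if_neg h]
      have hdi : dEntry κ (k i) (x i) = 0 := by
        have hki : k i = 1 := by omega
        rw [hxi, hki]; simp [dEntry]
      rw [hdi]
      ring
  · -- x is not a single-excitation string: both sides vanish
    rw [if_neg hx, mul_zero]
    symm
    rw [Finset.sum_eq_zero, mul_zero]
    intro i hi
    simp only [basisVec]
    rw [if_neg]
    intro h
    apply hx
    rw [h]
    simpa using congrArg Finset.card (delta_filter n i)
end

section
/- Let n ≥ 1, κ ∈ [0,1], and let k : Fin n → Fin 2 be an outcome string with j = #{m : k(m) = 0} ≥ 1 zeros. Then the outcome probability is ‖A_k W_n‖² = (j/n)·κ^{n-j}·(1-κ)^{j-1}, where the squared norm is ∑_x |(A_k W_n)(x)|². -/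
/-!
`W_n` is supported on the `n` strings `e_i = Pi.single i 1`, where it equals `1/√n`. At `e_i`
the squared modulus of the Kraus product is `|d(k i, 1)|² · ∏_{m ≠ i} |d(k m, 0)|²`: it
vanishes unless `k i = 0`, and then the other `j - 1` zeros of `k` contribute `1 - κ` each and
its `n - j` ones contribute `κ` each. Summing over the `j` positions with `k i = 0` gives the
formula.
-/

open scoped Classical

theorem filter_eq_one_eq_singleton_iff {ι : Type*} [Fintype ι] [DecidableEq ι]
    (x : ι → Fin 2) (i : ι) :
    Finset.univ.filter (fun m => x m = 1) = {i} ↔ x = Pi.single i 1 := by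
  simp only [Finset.ext_iff, Finset.mem_filter, Finset.mem_univ, true_and,
    Finset.mem_singleton, funext_iff]
  refine forall_congr' fun m => ?_
  rcases eq_or_ne m i with rfl | hm
  · simp
  · simp only [hm, iff_false, Pi.single_eq_of_ne hm]
    omega

theorem prod_compl_singleton_ite {ι M : Type*} [Fintype ι] [DecidableEq ι] [CommMonoid M]
    (p : ι → Prop) [DecidablePred p] {i : ι} (hi : p i) (a b : M) :
    ∏ m ∈ {i}ᶜ, (if p m then a else b) =
      a ^ ((Finset.univ.filter p).card - 1) *
        b ^ (Fintype.card ι - (Finset.univ.filter p).card) := by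
  rw [Finset.compl_singleton, Finset.prod_ite, Finset.prod_const, Finset.prod_const,
    Finset.filter_erase, Finset.filter_erase, Finset.card_erase_of_mem (by simpa using hi),
    Finset.erase_eq_of_notMem (by simpa using hi)]
  have hcard := Finset.card_filter_add_card_filter_not (s := Finset.univ) p
  rw [Finset.card_univ] at hcard
  congr 2
  omega

theorem Wstate_single (n : ℕ) (i : Fin n) :
    Wstate n (Pi.single i 1) = ((1 / Real.sqrt n : ℝ) : ℂ) := by
  simp [Wstate, (filter_eq_one_eq_singleton_iff _ i).2 rfl]

theorem Wstate_eq_zero_of_notMem_range {n : ℕ} {x : Fin n → Fin 2}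
    (hx : x ∉ Set.range fun i => Pi.single i 1) : Wstate n x = 0 := by
  refine if_neg fun hcard => hx ?_
  obtain ⟨i, hi⟩ := Finset.card_eq_one.1 hcard
  exact ⟨i, ((filter_eq_one_eq_singleton_iff x i).1 hi).symm⟩

theorem norm_sq_dEntry_zero {κ : ℝ} (hκ : κ ∈ Set.Icc (0 : ℝ) 1) (a : Fin 2) :
    ‖dEntry κ a 0‖ ^ 2 = if a = 0 then 1 - κ else κ := by
  fin_cases a <;> simp [dEntry, Complex.norm_real, Real.sq_sqrt, hκ.1, hκ.2]

theorem norm_sq_dEntry_one (κ : ℝ) (a : Fin 2) :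
    ‖dEntry κ a 1‖ ^ 2 = if a = 0 then 1 else 0 := by
  fin_cases a <;> simp [dEntry]

theorem norm_sq_prod_dEntry_single {n : ℕ} {κ : ℝ} (hκ : κ ∈ Set.Icc (0 : ℝ) 1)
    (k : Fin n → Fin 2) (i : Fin n) :
    ‖∏ m, dEntry κ (k m) ((Pi.single i 1 : Fin n → Fin 2) m)‖ ^ 2 =
      if k i = 0 then
        (1 - κ) ^ ((Finset.univ.filter fun m => k m = 0).card - 1) *
          κ ^ (n - (Finset.univ.filter fun m => k m = 0).card)
      else 0 := by
  rw [norm_prod, ← Finset.prod_pow, Fintype.prod_eq_mul_prod_compl i, Pi.single_eq_same,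
    norm_sq_dEntry_one]
  split_ifs with hki
  · have hcompl : ∀ m ∈ ({i}ᶜ : Finset (Fin n)),
        ‖dEntry κ (k m) ((Pi.single i 1 : Fin n → Fin 2) m)‖ ^ 2 =
          if k m = 0 then 1 - κ else κ := fun m hm => by
      rw [Pi.single_eq_of_ne (by simpa using hm), norm_sq_dEntry_zero hκ]
    rw [one_mul, Finset.prod_congr rfl hcompl, prod_compl_singleton_ite (fun m => k m = 0) hki,
      Fintype.card_fin]
  · exact zero_mul _

theorem sum_norm_sq_krausApply_Wstate (n : ℕ) (κ : ℝ) (k : Fin n → Fin 2) :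
    ∑ x, ‖krausApply n κ k (Wstate n) x‖ ^ 2 =
      ∑ i : Fin n, ‖∏ m, dEntry κ (k m) ((Pi.single i 1 : Fin n → Fin 2) m)‖ ^ 2 / n := by
  have single_injective : Function.Injective fun i : Fin n => (Pi.single i 1 : Fin n → Fin 2) :=
    fun i i' h => by simpa [Pi.single_apply] using congrFun h i
  symm
  refine Fintype.sum_of_injective _ single_injective _ _ (fun x hx => ?_) (fun i => ?_)
  · simp [krausApply, Wstate_eq_zero_of_notMem_range hx]
  · rw [krausApply, Wstate_single, norm_mul, mul_pow, Complex.norm_real, Real.norm_eq_abs,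
      sq_abs, div_pow, one_pow, Real.sq_sqrt n.cast_nonneg, mul_one_div]

theorem outcome_probability_general (n : ℕ) (κ : ℝ) (hκ : κ ∈ Set.Icc (0:ℝ) 1)
    (k : Fin n → Fin 2) (j : ℕ) (hj : j = (Finset.univ.filter fun m => k m = 0).card) :
    ∑ x : Fin n → Fin 2, ‖krausApply n κ k (Wstate n) x‖ ^ 2 =
      ((j : ℝ) / (n : ℝ)) * κ ^ (n - j) * (1 - κ) ^ (j - 1) := by
  simp only [sum_norm_sq_krausApply_Wstate, norm_sq_prod_dEntry_single hκ, ← hj]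
  rw [← Finset.sum_div, Finset.sum_ite, Finset.sum_const_zero, add_zero, Finset.sum_const, ← hj,
    nsmul_eq_mul]
  ring

/-- The outcome probability of an outcome string `k` with `j ≥ 1` zeros is
`‖A_k W_n‖² = (j/n)·κ^{n-j}·(1-κ)^{j-1}`. -/
theorem outcome_probability (n : ℕ) (hn : 1 ≤ n) (κ : ℝ) (hκ : κ ∈ Set.Icc (0:ℝ) 1)
    (k : Fin n → Fin 2) (j : ℕ) (hj : j = (Finset.univ.filter fun m => k m = 0).card)
    (hj1 : 1 ≤ j) :
    ∑ x : Fin n → Fin 2, ‖krausApply n κ k (Wstate n) x‖ ^ 2 =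
      ((j : ℝ) / (n : ℝ)) * κ ^ (n - j) * (1 - κ) ^ (j - 1) :=
  outcome_probability_general n κ hκ k j hj
end

section
/- For every c ∈ [0,1], the supremum over κ ∈ [0,1] of the function h(κ) = 2κ(1-κ) + (1-κ)²·c equals 1/(2-c), and it is attained at κ = (1-c)/(2-c). -/
/-- One-round optimization in the Fortescue–Lo protocol: for continuation value
`c ∈ [0,1]`, the supremum over `κ ∈ [0,1]` of
`h(κ) = 2κ(1-κ) + (1-κ)²·c` equals `1/(2-c)`, attained at `κ = (1-c)/(2-c)`. -/
theorem fortescue_lo_one_round (c : ℝ) (hc : c ∈ Set.Icc (0:ℝ) 1) :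
    sSup ((fun κ : ℝ => 2 * κ * (1 - κ) + (1 - κ) ^ 2 * c) '' Set.Icc (0:ℝ) 1) =
      1 / (2 - c) ∧
    (1 - c) / (2 - c) ∈ Set.Icc (0:ℝ) 1 ∧
    2 * ((1 - c) / (2 - c)) * (1 - (1 - c) / (2 - c)) +
      (1 - (1 - c) / (2 - c)) ^ 2 * c = 1 / (2 - c) := by
  obtain ⟨hc0, hc1⟩ := hc
  have h2c : (0:ℝ) < 2 - c := by linarith
  have hmem : (1 - c) / (2 - c) ∈ Set.Icc (0:ℝ) 1 := by
    constructor
    · exact div_nonneg (by linarith) h2c.le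
    · rw [div_le_one h2c]; linarith
  have hval : 2 * ((1 - c) / (2 - c)) * (1 - (1 - c) / (2 - c)) +
      (1 - (1 - c) / (2 - c)) ^ 2 * c = 1 / (2 - c) := by
    field_simp
    ring
  refine ⟨?_, hmem, hval⟩
  apply IsGreatest.csSup_eq
  constructor
  · exact ⟨(1 - c) / (2 - c), hmem, hval⟩
  · rintro y ⟨κ, hκ, rfl⟩
    simp only []
    rw [le_div_iff₀ h2c]
    nlinarith [sq_nonneg ((2 - c) * κ - (1 - c))]
end

section
/- Define the sequence (E_r) of real numbers by E_0 = 0 and E_{r+1} = sup_{κ ∈ [0,1]} (2κ(1-κ) + (1-κ)²·E_r). Then for every natural number r, E_r = r/(r+1); i.e., the maximum average entanglement shared after r rounds of the Fortescue–Lo protocol on a three-qubit W state is r/(1+r). -/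
/-- The maximum average entanglement shared after `r` rounds of the
Fortescue–Lo protocol on a three-qubit W state, defined by `E 0 = 0` and
`E (r+1) = sup_{κ ∈ [0,1]} (2κ(1-κ) + (1-κ)²·E r)`, equals `r/(r+1)`. -/
theorem fortescue_lo_value (E : ℕ → ℝ) (hE0 : E 0 = 0)
    (hErec : ∀ r : ℕ, E (r + 1) =
      sSup ((fun κ : ℝ => 2 * κ * (1 - κ) + (1 - κ) ^ 2 * E r) '' Set.Icc (0:ℝ) 1)) :
    ∀ r : ℕ, E r = (r : ℝ) / ((r : ℝ) + 1) := by
  intro r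
  induction r with
  | zero => simp [hE0]
  | succ r ih =>
    have hn : (0:ℝ) ≤ (r:ℝ) := Nat.cast_nonneg r
    have h1 : (0:ℝ) < (r:ℝ) + 1 := by linarith
    have h2 : (0:ℝ) < (r:ℝ) + 2 := by linarith
    have hG : IsGreatest ((fun κ : ℝ => 2 * κ * (1 - κ) + (1 - κ) ^ 2 * E r) ''
        Set.Icc (0:ℝ) 1) (((r:ℝ) + 1) / ((r:ℝ) + 2)) := by
      constructor
      · refine ⟨1 / ((r:ℝ) + 2), ⟨by positivity, ?_⟩, ?_⟩
        · rw [div_le_one h2]; linarith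
        · rw [ih]
          field_simp
          ring
      · rintro y ⟨κ, ⟨hκ0, hκ1⟩, rfl⟩
        simp only [ih]
        have hd : ((r:ℝ) / ((r:ℝ) + 1)) * ((r:ℝ) + 1) = (r:ℝ) := by field_simp
        have hM : (((r:ℝ) + 1) / ((r:ℝ) + 2)) * ((r:ℝ) + 2) = (r:ℝ) + 1 := by field_simp
        have key : ((r:ℝ) + 1) / ((r:ℝ) + 2) - (2 * κ * (1 - κ) + (1 - κ) ^ 2 * ((r:ℝ) / ((r:ℝ) + 1)))
            = (((r:ℝ) + 2) / ((r:ℝ) + 1)) * (κ - 1 / ((r:ℝ) + 2)) ^ 2 := by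
          field_simp
          ring
        have h3 : 0 ≤ (((r:ℝ) + 2) / ((r:ℝ) + 1)) * (κ - 1 / ((r:ℝ) + 2)) ^ 2 := by positivity
        linarith
    have := hErec r
    rw [hG.csSup_eq] at this
    rw [this]
    push_cast
    ring
end

section
/- Let M ≥ 1 be a natural number and a : ℕ → ℝ with a_i ≥ a_{i+1} for all 0 ≤ i < M (the values are antitone). Then the function F(ε) = ∑_{i=0}^{M} C(M,i)·ε^i·(1-ε)^{M-i}·a_i is antitone (monotonically nonincreasing) on the interval [0,1]. -/
/-!
`F` is the Bernstein combination `∑ aᵢ bₘ,ᵢ`. Differentiating the Bernstein basis and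
reindexing gives `F' = M ∑ (aᵢ₊₁ - aᵢ) bₘ₋₁,ᵢ`, a combination of nonnegative functions on
`[0, 1]` with nonpositive coefficients.
-/

open Finset Polynomial

theorem bernsteinPolynomial.derivative_sum_smul_succ {R : Type*} [CommRing R] (n : ℕ)
    (a : ℕ → R) :
    derivative (∑ i ∈ range (n + 2), a i • bernsteinPolynomial R (n + 1) i) =
      ((n + 1 : ℕ) : R[X]) *
        ∑ i ∈ range (n + 1), (a (i + 1) - a i) • bernsteinPolynomial R n i := by
  have shifted : ∑ i ∈ range (n + 1), a (i + 1) • bernsteinPolynomial R n (i + 1) =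
      ∑ i ∈ range (n + 1), a i • bernsteinPolynomial R n i - a 0 • bernsteinPolynomial R n 0 := by
    rw [eq_sub_iff_add_eq, ← sum_range_succ' (fun i => a i • bernsteinPolynomial R n i),
      sum_range_succ, bernsteinPolynomial.eq_zero_of_lt R (Nat.lt_succ_self n), smul_zero,
      add_zero]
  rw [sum_range_succ', derivative_add, derivative_sum, derivative_smul,
    bernsteinPolynomial.derivative_zero, neg_mul, smul_neg, ← mul_smul_comm]
  simp_rw [derivative_smul, bernsteinPolynomial.derivative_succ, Nat.add_sub_cancel,
    ← mul_smul_comm, ← mul_sum, smul_sub, sub_smul, sum_sub_distrib, shifted]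
  ring

theorem bernsteinPolynomial.eval_nonneg {x : ℝ} (hx : x ∈ Set.Icc (0 : ℝ) 1) (n ν : ℕ) :
    0 ≤ (bernsteinPolynomial ℝ n ν).eval x := by
  obtain ⟨hx₀, hx₁⟩ := hx
  have : 0 ≤ 1 - x := sub_nonneg.2 hx₁
  simp only [bernsteinPolynomial, eval_mul, eval_pow, eval_natCast, eval_sub, eval_one, eval_X]
  positivity

theorem antitoneOn_eval_sum_smul_bernsteinPolynomial (n : ℕ) (a : ℕ → ℝ)
    (ha : ∀ i < n, a (i + 1) ≤ a i) :
    AntitoneOn (fun x => (∑ i ∈ range (n + 1), a i • bernsteinPolynomial ℝ n i).eval x)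
      (Set.Icc 0 1) := by
  cases n with
  | zero =>
    intro x _ y _ _
    simp [bernsteinPolynomial]
  | succ n =>
    set p := ∑ i ∈ range (n + 2), a i • bernsteinPolynomial ℝ (n + 1) i
    refine antitoneOn_of_deriv_nonpos (convex_Icc 0 1) p.continuousOn
      p.differentiable.differentiableOn fun x hx => ?_
    rw [interior_Icc] at hx
    rw [Polynomial.deriv, bernsteinPolynomial.derivative_sum_smul_succ, eval_mul, eval_finsetSum]
    refine mul_nonpos_of_nonneg_of_nonpos (by rw [eval_natCast]; positivity)
      (sum_nonpos fun i hi => ?_)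
    rw [eval_smul, smul_eq_mul]
    exact mul_nonpos_of_nonpos_of_nonneg (sub_nonpos.2 (ha i (mem_range.1 hi)))
      (bernsteinPolynomial.eval_nonneg (Set.Ioo_subset_Icc_self hx) n i)

theorem binomial_average_antitone_general (M : ℕ) (a : ℕ → ℝ)
    (ha : ∀ i < M, a (i + 1) ≤ a i) :
    AntitoneOn (fun ε : ℝ => ∑ i ∈ Finset.range (M + 1),
      (M.choose i : ℝ) * ε ^ i * (1 - ε) ^ (M - i) * a i) (Set.Icc (0:ℝ) 1) := by
  convert antitoneOn_eval_sum_smul_bernsteinPolynomial M a ha using 2 with ε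
  simp [eval_finsetSum, bernsteinPolynomial, mul_comm]

/-- If the values `a_i` are antitone (`a_{i+1} ≤ a_i` for `i < M`), then the
binomial loss average `F(ε) = ∑_{i=0}^{M} C(M,i)·ε^i·(1-ε)^{M-i}·a_i` is
monotonically nonincreasing on `[0,1]`. -/
theorem binomial_average_antitone (M : ℕ) (hM : 1 ≤ M) (a : ℕ → ℝ)
    (ha : ∀ i < M, a (i + 1) ≤ a i) :
    AntitoneOn (fun ε : ℝ => ∑ i ∈ Finset.range (M + 1),
      (M.choose i : ℝ) * ε ^ i * (1 - ε) ^ (M - i) * a i) (Set.Icc (0:ℝ) 1) :=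
  binomial_average_antitone_general M a ha
end
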